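/- arXiv:2004.12712 — 3 statements merged into one kernel-verified Lean document; each statement's English description precedes it below -/
import Mathlib

section
/- Let 1 < q < ∞, let Ω ⊆ ℝⁿ be an open set, and let w, a be weights on Ω with w·a^ε ∈ L¹_loc(Ω) for all ε ∈ (0, q−1). If a ∈ L^q(Ω, w), then for every measurable function f one has ‖f‖_{L^{q)}_a(Ω,w)} ≤ ‖f‖_{L^q(Ω,w)} · ‖a‖_{L^{q)}_a(Ω,w)} · ‖a‖_{L^q(Ω,w)}^{−1}, and for every fixed ε ∈ (0, q−1) one has ‖f‖_{L^{q−ε}(Ω, w a^ε)} ≤ ε^{−1/(q−ε)} ‖f‖_{L^{q)}_a(Ω,w)}; in particular the continuous embeddings L^q(Ω,w) ↪ L^{q)}_a(Ω,w) ↪ L^{q−ε}(Ω, w a^ε) hold. -/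
open MeasureTheory Metric Set ENNReal

/-- The weighted Lebesgue norm `‖f‖_{L^p(Ω,v)} = (∫_Ω |f|^p v dx)^{1/p}`. -/
noncomputable def wLqNorm {n : ℕ} (p : ℝ) (v : EuclideanSpace ℝ (Fin n) → ℝ)
    (Ω : Set (EuclideanSpace ℝ (Fin n))) (f : EuclideanSpace ℝ (Fin n) → ℝ) : ℝ≥0∞ :=
  (∫⁻ x in Ω, ENNReal.ofReal |f x| ^ p * ENNReal.ofReal (v x)) ^ (1 / p)

/-- The generalized grand Lebesgue norm
`‖f‖_{L^{q)}_a(Ω,w)} = sup_{0<ε<q−1} (ε ∫_Ω |f|^{q−ε} w a^ε dx)^{1/(q−ε)}`. -/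
noncomputable def grandNorm {n : ℕ} (q : ℝ) (w a : EuclideanSpace ℝ (Fin n) → ℝ)
    (Ω : Set (EuclideanSpace ℝ (Fin n))) (f : EuclideanSpace ℝ (Fin n) → ℝ) : ℝ≥0∞ :=
  ⨆ (ε : ℝ) (_ : ε ∈ Set.Ioo (0 : ℝ) (q - 1)),
    (ENNReal.ofReal ε *
      ∫⁻ x in Ω, ENNReal.ofReal |f x| ^ (q - ε) * ENNReal.ofReal (w x * a x ^ ε))
        ^ (1 / (q - ε))

/-!
For fixed `ε`, writing `|f|^(q-ε) w a^ε = (|f|^q w)^((q-ε)/q) (a^q w)^(ε/q)` and applying Hölder's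
inequality with exponents `q/(q-ε)` and `q/ε` gives
`‖f‖_{L^{q-ε}(w a^ε)} ≤ ‖f‖_{L^q(w)} ‖a‖_{L^q(w)}^{ε/(q-ε)}`, with equality for `f = a`.
Since the `ε`-term of the grand norm is `ε^{1/(q-ε)} ‖f‖_{L^{q-ε}(w a^ε)}`, the two bounds combine
term by term into the first inequality, and the second is the `ε`-term alone.
-/

namespace ENNReal

theorem rpow_sub_mul_mul_rpow_eq (F W G : ℝ≥0∞) {q ε : ℝ} (hε : 0 < ε) (hεq : ε < q) :
    F ^ (q - ε) * (W * G ^ ε) = (F ^ q * W) ^ ((q - ε) / q) * (G ^ q * W) ^ (ε / q) := by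
  have hq : q ≠ 0 := by linarith
  have hW : W ^ ((q - ε) / q) * W ^ (ε / q) = W := by
    rw [← rpow_add_of_nonneg _ _ (div_nonneg (by linarith) (by linarith))
      (div_nonneg hε.le (by linarith)), ← add_div, sub_add_cancel, div_self hq, rpow_one]
  rw [mul_rpow_of_nonneg _ _ (div_nonneg (by linarith) (by linarith)),
    mul_rpow_of_nonneg _ _ (div_nonneg hε.le (by linarith)), ← rpow_mul, ← rpow_mul,
    mul_div_cancel₀ _ hq, mul_div_cancel₀ _ hq, mul_mul_mul_comm, hW]
  ring

theorem rpow_eq_rpow_add_one_mul_inv {x : ℝ≥0∞} (hx : x ≠ ⊤) {y : ℝ} (hy : 0 < y) :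
    x ^ y = x ^ (y + 1) * x⁻¹ := by
  rcases eq_or_ne x 0 with rfl | hx0
  · rw [zero_rpow_of_pos hy, zero_rpow_of_pos (by linarith), zero_mul]
  · rw [rpow_add _ _ hx0 hx, rpow_one, mul_assoc, ENNReal.mul_inv_cancel hx0 hx, mul_one]

theorem ofReal_mul_rpow_of_nonneg (w : ℝ) {a : ℝ} (ha : 0 ≤ a) {ε : ℝ} (hε : 0 ≤ ε) :
    ENNReal.ofReal (w * a ^ ε) = ENNReal.ofReal w * ENNReal.ofReal |a| ^ ε := by
  rw [ENNReal.ofReal_mul' (Real.rpow_nonneg ha ε), abs_of_nonneg ha,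
    ENNReal.ofReal_rpow_of_nonneg ha hε]

end ENNReal

section Interpolation

variable {α : Type*} [MeasurableSpace α] {μ : Measure α}

theorem lintegral_rpow_sub_mul_mul_rpow_le {F W G : α → ℝ≥0∞} (hF : AEMeasurable F μ)
    (hW : AEMeasurable W μ) (hG : AEMeasurable G μ) {q ε : ℝ} (hε : 0 < ε) (hεq : ε < q) :
    ∫⁻ x, F x ^ (q - ε) * (W x * G x ^ ε) ∂μ
      ≤ (∫⁻ x, F x ^ q * W x ∂μ) ^ ((q - ε) / q) * (∫⁻ x, G x ^ q * W x ∂μ) ^ (ε / q) := by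
  simp_rw [rpow_sub_mul_mul_rpow_eq _ _ _ hε hεq]
  exact lintegral_mul_norm_pow_le ((hF.pow_const q).mul hW) ((hG.pow_const q).mul hW)
    (div_nonneg (by linarith) (by linarith)) (div_nonneg hε.le (by linarith))
    (by rw [← add_div, sub_add_cancel, div_self (by linarith)])

end Interpolation

section WeightedNorms

variable {n : ℕ} {Ω : Set (EuclideanSpace ℝ (Fin n))} {q ε : ℝ}
  {w a f : EuclideanSpace ℝ (Fin n) → ℝ}

theorem wLqNorm_le_wLqNorm_mul_wLqNorm_rpow (hw : Measurable w) (ha : Measurable a)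
    (ha_nonneg : ∀ᵐ x ∂volume.restrict Ω, 0 ≤ a x) (hf : Measurable f) (hε : 0 < ε)
    (hεq : ε < q) :
    wLqNorm (q - ε) (fun x => w x * a x ^ ε) Ω f
      ≤ wLqNorm q w Ω f * wLqNorm q w Ω a ^ (ε / (q - ε)) := by
  have hqε : 0 < q - ε := by linarith
  have hq : q ≠ 0 := by linarith
  have holder := lintegral_rpow_sub_mul_mul_rpow_le (μ := volume.restrict Ω)
    hf.abs.ennreal_ofReal.aemeasurable hw.ennreal_ofReal.aemeasurable
    ha.abs.ennreal_ofReal.aemeasurable hε hεq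
  have hweight : (fun x => ENNReal.ofReal |f x| ^ (q - ε) * ENNReal.ofReal (w x * a x ^ ε))
      =ᵐ[volume.restrict Ω]
        fun x =>
          ENNReal.ofReal |f x| ^ (q - ε) * (ENNReal.ofReal (w x) * ENNReal.ofReal |a x| ^ ε) :=
    ha_nonneg.mono fun x hx => by dsimp only; rw [ofReal_mul_rpow_of_nonneg _ hx hε.le]
  rw [← lintegral_congr_ae hweight] at holder
  unfold wLqNorm
  calc _ ≤ _ := rpow_le_rpow holder (by positivity)
    _ = _ := by
      rw [mul_rpow_of_nonneg _ _ (by positivity), ← rpow_mul, ← rpow_mul, ← rpow_mul]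
      congr 2 <;> field_simp

theorem wLqNorm_self_eq_wLqNorm_rpow (ha_nonneg : ∀ᵐ x ∂volume.restrict Ω, 0 ≤ a x)
    (hε : 0 ≤ ε) (hεq : ε < q) :
    wLqNorm (q - ε) (fun x => w x * a x ^ ε) Ω a = wLqNorm q w Ω a ^ (q / (q - ε)) := by
  have hqε : 0 < q - ε := by linarith
  have hq : q ≠ 0 := by linarith
  have hint : ∫⁻ x in Ω, ENNReal.ofReal |a x| ^ (q - ε) * ENNReal.ofReal (w x * a x ^ ε)
      = ∫⁻ x in Ω, ENNReal.ofReal |a x| ^ q * ENNReal.ofReal (w x) := by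
    refine lintegral_congr_ae (ha_nonneg.mono fun x hx => ?_)
    dsimp only
    rw [ofReal_mul_rpow_of_nonneg _ hx hε, mul_left_comm, ← rpow_add_of_nonneg _ _ hqε.le hε,
      sub_add_cancel, mul_comm]
  unfold wLqNorm
  rw [hint, ← rpow_mul]
  congr 1
  field_simp

theorem grandNorm_eq_iSup_mul_wLqNorm :
    grandNorm q w a Ω f = ⨆ (ε : ℝ) (_ : ε ∈ Ioo (0 : ℝ) (q - 1)),
      ENNReal.ofReal ε ^ (1 / (q - ε)) * wLqNorm (q - ε) (fun x => w x * a x ^ ε) Ω f := by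
  refine iSup_congr fun ε => iSup_congr fun hε => ?_
  exact mul_rpow_of_nonneg _ _ (one_div_nonneg.2 (by linarith [hε.2]))

theorem rpow_mul_wLqNorm_le_grandNorm (hε : ε ∈ Ioo (0 : ℝ) (q - 1)) :
    ENNReal.ofReal ε ^ (1 / (q - ε)) * wLqNorm (q - ε) (fun x => w x * a x ^ ε) Ω f
      ≤ grandNorm q w a Ω f := by
  rw [grandNorm_eq_iSup_mul_wLqNorm]
  exact le_iSup₂_of_le ε hε le_rfl

theorem grandNorm_le_wLqNorm_mul_grandNorm_mul_inv (hw : Measurable w) (ha : Measurable a)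
    (ha_nonneg : ∀ᵐ x ∂volume.restrict Ω, 0 ≤ a x) (ha_mem : wLqNorm q w Ω a ≠ ⊤)
    (hf : Measurable f) :
    grandNorm q w a Ω f ≤ wLqNorm q w Ω f * grandNorm q w a Ω a * (wLqNorm q w Ω a)⁻¹ := by
  rw [grandNorm_eq_iSup_mul_wLqNorm]
  refine iSup₂_le fun ε hε => ?_
  have hεq : ε < q := by linarith [hε.2]
  have hqε : 0 < q - ε := by linarith
  calc ENNReal.ofReal ε ^ (1 / (q - ε)) * wLqNorm (q - ε) (fun x => w x * a x ^ ε) Ω f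
      ≤ ENNReal.ofReal ε ^ (1 / (q - ε)) * (wLqNorm q w Ω f * wLqNorm q w Ω a ^ (ε / (q - ε))) := by
        gcongr
        exact wLqNorm_le_wLqNorm_mul_wLqNorm_rpow hw ha ha_nonneg hf hε.1 hεq
    _ = wLqNorm q w Ω f
          * (ENNReal.ofReal ε ^ (1 / (q - ε)) * wLqNorm (q - ε) (fun x => w x * a x ^ ε) Ω a)
          * (wLqNorm q w Ω a)⁻¹ := by
        rw [wLqNorm_self_eq_wLqNorm_rpow ha_nonneg hε.1.le hεq,
          rpow_eq_rpow_add_one_mul_inv ha_mem (div_pos hε.1 hqε),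
          show ε / (q - ε) + 1 = q / (q - ε) by field_simp; ring]
        ring
    _ ≤ _ := by
        gcongr
        exact rpow_mul_wLqNorm_le_grandNorm hε

theorem wLqNorm_le_ofReal_rpow_neg_mul_grandNorm (hε : ε ∈ Ioo (0 : ℝ) (q - 1)) :
    wLqNorm (q - ε) (fun x => w x * a x ^ ε) Ω f
      ≤ ENNReal.ofReal (ε ^ (-(1 / (q - ε)))) * grandNorm q w a Ω f := by
  have hc0 : ENNReal.ofReal ε ^ (1 / (q - ε)) ≠ 0 :=
    (rpow_pos (ofReal_pos.2 hε.1) ofReal_ne_top).ne'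
  have hctop : ENNReal.ofReal ε ^ (1 / (q - ε)) ≠ ⊤ :=
    rpow_ne_top_of_nonneg (one_div_nonneg.2 (by linarith [hε.2])) ofReal_ne_top
  rw [← ofReal_rpow_of_pos hε.1, rpow_neg]
  calc wLqNorm (q - ε) (fun x => w x * a x ^ ε) Ω f
      = (ENNReal.ofReal ε ^ (1 / (q - ε)))⁻¹
          * (ENNReal.ofReal ε ^ (1 / (q - ε)) * wLqNorm (q - ε) (fun x => w x * a x ^ ε) Ω f) := by
        rw [← mul_assoc, ENNReal.inv_mul_cancel hc0 hctop, one_mul]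
    _ ≤ _ := by
        gcongr
        exact rpow_mul_wLqNorm_le_grandNorm hε

end WeightedNorms

theorem grand_lebesgue_embeddings_general {n : ℕ} (q : ℝ)
    (Ω : Set (EuclideanSpace ℝ (Fin n)))
    (w a : EuclideanSpace ℝ (Fin n) → ℝ)
    (hw_meas : Measurable w)
    (ha_meas : Measurable a) (ha_pos : ∀ᵐ x ∂volume.restrict Ω, 0 < a x)
    (ha_mem : wLqNorm q w Ω a ≠ ⊤)
    (f : EuclideanSpace ℝ (Fin n) → ℝ) (hf : Measurable f) :
    grandNorm q w a Ω f ≤ wLqNorm q w Ω f * grandNorm q w a Ω a * (wLqNorm q w Ω a)⁻¹ ∧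
    ∀ ε ∈ Set.Ioo (0 : ℝ) (q - 1),
      wLqNorm (q - ε) (fun x => w x * a x ^ ε) Ω f
        ≤ ENNReal.ofReal (ε ^ (-(1 / (q - ε)))) * grandNorm q w a Ω f := by
  have ha_nonneg : ∀ᵐ x ∂volume.restrict Ω, 0 ≤ a x := ha_pos.mono fun _ hx => hx.le
  exact ⟨grandNorm_le_wLqNorm_mul_grandNorm_mul_inv hw_meas ha_meas ha_nonneg ha_mem hf,
    fun ε hε => wLqNorm_le_ofReal_rpow_neg_mul_grandNorm hε⟩

/-- if `a ∈ L^q(Ω,w)` then for every measurable `f`,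
`‖f‖_{L^{q)}_a(Ω,w)} ≤ ‖f‖_{L^q(Ω,w)} ‖a‖_{L^{q)}_a(Ω,w)} ‖a‖_{L^q(Ω,w)}^{−1}`, and
for every `ε ∈ (0,q−1)`,
`‖f‖_{L^{q−ε}(Ω,w a^ε)} ≤ ε^{−1/(q−ε)} ‖f‖_{L^{q)}_a(Ω,w)}`;
in particular `L^q(Ω,w) ↪ L^{q)}_a(Ω,w) ↪ L^{q−ε}(Ω,w a^ε)`. -/
theorem grand_lebesgue_embeddings {n : ℕ} (q : ℝ) (hq : 1 < q)
    (Ω : Set (EuclideanSpace ℝ (Fin n))) (hΩ : IsOpen Ω)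
    (w a : EuclideanSpace ℝ (Fin n) → ℝ)
    (hw_meas : Measurable w) (hw_pos : ∀ᵐ x ∂volume.restrict Ω, 0 < w x)
    (ha_meas : Measurable a) (ha_pos : ∀ᵐ x ∂volume.restrict Ω, 0 < a x)
    (hloc : ∀ ε ∈ Set.Ioo (0 : ℝ) (q - 1),
      LocallyIntegrableOn (fun x => w x * a x ^ ε) Ω volume)
    (ha_mem : wLqNorm q w Ω a ≠ ⊤)
    (f : EuclideanSpace ℝ (Fin n) → ℝ) (hf : Measurable f) :
    grandNorm q w a Ω f ≤ wLqNorm q w Ω f * grandNorm q w a Ω a * (wLqNorm q w Ω a)⁻¹ ∧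
    ∀ ε ∈ Set.Ioo (0 : ℝ) (q - 1),
      wLqNorm (q - ε) (fun x => w x * a x ^ ε) Ω f
        ≤ ENNReal.ofReal (ε ^ (-(1 / (q - ε)))) * grandNorm q w a Ω f :=
  grand_lebesgue_embeddings_general q Ω w a hw_meas ha_meas ha_pos ha_mem f hf
end

section
/- Let 1 < q < ∞, let Ω ⊆ ℝⁿ be an open set, and let w, a be weights with w·a^ε ∈ L¹_loc(Ω) for all ε ∈ (0, q−1) and a ∈ L^q(Ω,w). Then the generalized grand Lebesgue space L^{q)}_a(Ω,w), equipped with the norm ‖·‖_{L^{q)}_a(Ω,w)}, is a Banach space (in particular it is complete). -/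
/-!
The `ε`-term of the grand norm is the `L^{q-ε}` norm for the measure `ε w a^ε dx` on `Ω`, so the
grand norm is a supremum of `L^p` norms for measures that, because `w, a > 0` a.e. on `Ω`, are all
equivalent to Lebesgue measure on `Ω`. A grand-norm Cauchy sequence is Cauchy in one fixed `L^p`
space, so by the Riesz–Fischer argument a subsequence converges a.e.; Fatou's lemma in each `L^p`
norm, uniformly in `ε`, then shows that the whole sequence converges to this a.e. limit in the
grand norm.
-/

open MeasureTheory Metric Set ENNReal

open Filter Topology

lemma exists_strictMono_forall_lt_two_inv_pow {d : ℕ → ℕ → ℝ≥0∞}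
    (hd : ∀ δ > 0, ∃ N, ∀ m ≥ N, ∀ k ≥ N, d m k < δ) :
    ∃ φ : ℕ → ℕ, StrictMono φ ∧ ∀ j, ∀ m ≥ φ j, ∀ k ≥ φ j, d m k < 2⁻¹ ^ j := by
  refine extraction_forall_of_eventually'
    (P := fun j n => ∀ m ≥ n, ∀ k ≥ n, d m k < 2⁻¹ ^ j) fun j => ?_
  obtain ⟨N, hN⟩ := hd (2⁻¹ ^ j) (ENNReal.pow_pos (by simp) j)
  exact ⟨N, fun n hn m hm k hk => hN m (hn.trans hm) k (hn.trans hk)⟩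

section SupremumOfLpNorms

variable {α ι E : Type*} [MeasurableSpace α] [NormedAddCommGroup E]
  {μ : ι → Measure α} {p : ι → ℝ≥0∞} {ν : Measure α}

lemma iSup_eLpNorm_sub_le (hp : ∀ i, 1 ≤ p i) {f g : α → E}
    (hf : ∀ i, AEStronglyMeasurable f (μ i)) (hg : ∀ i, AEStronglyMeasurable g (μ i)) :
    ⨆ i, eLpNorm (f - g) (p i) (μ i) ≤
      (⨆ i, eLpNorm f (p i) (μ i)) + ⨆ i, eLpNorm g (p i) (μ i) :=
  iSup_le fun i => (eLpNorm_sub_le (hf i) (hg i) (hp i)).trans <|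
    add_le_add (le_iSup (fun i => eLpNorm f (p i) (μ i)) i)
      (le_iSup (fun i => eLpNorm g (p i) (μ i)) i)

lemma iSup_eLpNorm_le_of_ae_tendsto {κ : Type*} {u : Filter κ} [u.NeBot] [u.IsCountablyGenerated]
    (hμ : ∀ i, μ i ≪ ν) {G : κ → α → E} {g : α → E} {c : ℝ≥0∞}
    (hG : ∀ j, AEStronglyMeasurable (G j) ν) (h_lim : ∀ᵐ x ∂ν, Tendsto (G · x) u (𝓝 (g x)))
    (hc : ∀ᶠ j in u, ⨆ i, eLpNorm (G j) (p i) (μ i) ≤ c) :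
    ⨆ i, eLpNorm g (p i) (μ i) ≤ c :=
  iSup_le fun i => Lp.eLpNorm_le_of_ae_tendsto
    (hc.mono fun j hj => (le_iSup (fun i => eLpNorm (G j) (p i) (μ i)) i).trans hj)
    (fun j => (hG j).mono_ac (hμ i)) ((hμ i).ae_le h_lim)

lemma iSup_eLpNorm_ne_top_of_tendsto (hp : ∀ i, 1 ≤ p i) (hμ : ∀ i, μ i ≪ ν) {F : ℕ → α → E}
    {f : α → E} (hF : ∀ k, AEStronglyMeasurable (F k) ν) (hf : AEStronglyMeasurable f ν)
    (hF_fin : ∀ k, ⨆ i, eLpNorm (F k) (p i) (μ i) ≠ ⊤)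
    (hF_lim : Tendsto (fun k => ⨆ i, eLpNorm (F k - f) (p i) (μ i)) atTop (𝓝 0)) :
    ⨆ i, eLpNorm f (p i) (μ i) ≠ ⊤ := by
  obtain ⟨k, hk⟩ := (hF_lim.eventually (gt_mem_nhds zero_lt_one)).exists
  have h_sub := iSup_eLpNorm_sub_le hp (fun i => (hF k).mono_ac (hμ i))
    (fun i => ((hF k).sub hf).mono_ac (hμ i))
  rw [sub_sub_cancel (F k) f] at h_sub
  exact ne_top_of_le_ne_top (add_ne_top.2 ⟨hF_fin k, hk.ne_top⟩) h_sub

theorem exists_tendsto_iSup_eLpNorm_of_cauchy [CompleteSpace E] (hp : ∀ i, 1 ≤ p i)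
    (hμ : ∀ i, μ i ≪ ν) (i₀ : ι) (hν : ν ≪ μ i₀) {F : ℕ → α → E}
    (hF : ∀ k, AEStronglyMeasurable (F k) ν)
    (hF_cauchy : ∀ δ > 0, ∃ N, ∀ m ≥ N, ∀ k ≥ N, ⨆ i, eLpNorm (F m - F k) (p i) (μ i) < δ) :
    ∃ f : α → E, StronglyMeasurable f ∧
      Tendsto (fun k => ⨆ i, eLpNorm (F k - f) (p i) (μ i)) atTop (𝓝 0) := by
  obtain ⟨φ, hφ, hφ_cauchy⟩ := exists_strictMono_forall_lt_two_inv_pow hF_cauchy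
  have h_conv : ∀ᵐ x ∂ν, ∃ l, Tendsto (fun j => F (φ j) x) atTop (𝓝 l) :=
    hν.ae_le <| Lp.ae_tendsto_of_cauchy_eLpNorm (fun j => (hF (φ j)).mono_ac (hμ i₀)) (hp i₀)
      (B := fun j => 2⁻¹ ^ j) (by simp [ENNReal.tsum_geometric]) fun N m k hm hk =>
        (le_iSup (fun i => eLpNorm (F (φ m) - F (φ k)) (p i) (μ i)) i₀).trans_lt
          (hφ_cauchy N _ (hφ.monotone hm) _ (hφ.monotone hk))
  obtain ⟨f, hf, hf_lim⟩ :=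
    exists_stronglyMeasurable_limit_of_tendsto_ae (fun j => hF (φ j)) h_conv
  refine ⟨f, hf, ENNReal.tendsto_atTop_zero.2 fun δ hδ => ?_⟩
  obtain ⟨N, hN⟩ := hF_cauchy δ hδ
  refine ⟨N, fun m hm => iSup_eLpNorm_le_of_ae_tendsto (u := atTop) hμ
    (fun j => (hF m).sub (hF (φ j))) ?_ ?_⟩
  · filter_upwards [hf_lim] with x hx using tendsto_const_nhds.sub hx
  · filter_upwards [eventually_ge_atTop N] with j hj
    exact (hN m hm _ (hj.trans hφ.le_apply)).le

end SupremumOfLpNorms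

section GrandNorm

variable {n : ℕ} {q : ℝ} {w a : EuclideanSpace ℝ (Fin n) → ℝ} {Ω : Set (EuclideanSpace ℝ (Fin n))}

noncomputable def grandWeight (w a : EuclideanSpace ℝ (Fin n) → ℝ) (ε : ℝ)
    (x : EuclideanSpace ℝ (Fin n)) : ℝ≥0∞ :=
  ENNReal.ofReal ε * ENNReal.ofReal (w x * a x ^ ε)

noncomputable def grandMeasure (w a : EuclideanSpace ℝ (Fin n) → ℝ)
    (Ω : Set (EuclideanSpace ℝ (Fin n))) (ε : ℝ) : Measure (EuclideanSpace ℝ (Fin n)) :=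
  (volume.restrict Ω).withDensity (grandWeight w a ε)

lemma measurable_grandWeight (hw : Measurable w) (ha : Measurable a) (ε : ℝ) :
    Measurable (grandWeight w a ε) :=
  measurable_const.mul (hw.mul (ha.pow_const ε)).ennreal_ofReal

lemma eLpNorm_grandMeasure (hw : Measurable w) (ha : Measurable a) {ε : ℝ} (hεq : ε < q)
    (f : EuclideanSpace ℝ (Fin n) → ℝ) :
    eLpNorm f (ENNReal.ofReal (q - ε)) (grandMeasure w a Ω ε) =
      (ENNReal.ofReal ε *
        ∫⁻ x in Ω, ENNReal.ofReal |f x| ^ (q - ε) * ENNReal.ofReal (w x * a x ^ ε))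
          ^ (1 / (q - ε)) := by
  have hp : 0 < q - ε := sub_pos.2 hεq
  rw [eLpNorm_eq_eLpNorm' (by simpa using hp) ofReal_ne_top, toReal_ofReal hp.le,
    eLpNorm'_eq_lintegral_enorm, grandMeasure,
    lintegral_withDensity_eq_lintegral_mul_non_measurable _ (measurable_grandWeight hw ha ε)
      (ae_of_all _ fun _ => mul_lt_top ofReal_lt_top ofReal_lt_top),
    ← lintegral_const_mul' _ _ ofReal_ne_top]
  congr 2 with x
  simp only [grandWeight, Pi.mul_apply, Real.enorm_eq_ofReal_abs]
  ring

lemma grandNorm_eq_iSup_eLpNorm (hw : Measurable w) (ha : Measurable a)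
    (f : EuclideanSpace ℝ (Fin n) → ℝ) :
    grandNorm q w a Ω f =
      ⨆ ε : Ioo (0 : ℝ) (q - 1), eLpNorm f (ENNReal.ofReal (q - ε)) (grandMeasure w a Ω ε) := by
  rw [grandNorm, iSup_subtype']
  congr 1 with ε
  rw [eLpNorm_grandMeasure hw ha (by linarith [ε.2.2])]

lemma grandMeasure_absolutelyContinuous (w a : EuclideanSpace ℝ (Fin n) → ℝ)
    (Ω : Set (EuclideanSpace ℝ (Fin n))) (ε : ℝ) : grandMeasure w a Ω ε ≪ volume.restrict Ω :=
  withDensity_absolutelyContinuous _ _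

lemma absolutelyContinuous_grandMeasure (hw : Measurable w) (ha : Measurable a)
    (hw_pos : ∀ᵐ x ∂volume.restrict Ω, 0 < w x) (ha_pos : ∀ᵐ x ∂volume.restrict Ω, 0 < a x)
    {ε : ℝ} (hε : 0 < ε) : volume.restrict Ω ≪ grandMeasure w a Ω ε := by
  refine withDensity_absolutelyContinuous' (measurable_grandWeight hw ha ε).aemeasurable ?_
  filter_upwards [hw_pos, ha_pos] with x hwx hax
  exact mul_ne_zero (ofReal_pos.2 hε).ne'
    (ofReal_pos.2 (mul_pos hwx (Real.rpow_pos_of_pos hax ε))).ne'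

end GrandNorm

theorem grand_lebesgue_complete_general {n : ℕ} (q : ℝ) (hq : 1 < q)
    (Ω : Set (EuclideanSpace ℝ (Fin n)))
    (w a : EuclideanSpace ℝ (Fin n) → ℝ)
    (hw_meas : Measurable w) (hw_pos : ∀ᵐ x ∂volume.restrict Ω, 0 < w x)
    (ha_meas : Measurable a) (ha_pos : ∀ᵐ x ∂volume.restrict Ω, 0 < a x)
    (F : ℕ → EuclideanSpace ℝ (Fin n) → ℝ)
    (hF_meas : ∀ k, Measurable (F k))
    (hF_mem : ∀ k, grandNorm q w a Ω (F k) ≠ ⊤)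
    (hF_cauchy : ∀ δ : ℝ, 0 < δ → ∃ N : ℕ, ∀ m ≥ N, ∀ k ≥ N,
      grandNorm q w a Ω (fun x => F m x - F k x) < ENNReal.ofReal δ) :
    ∃ f : EuclideanSpace ℝ (Fin n) → ℝ, Measurable f ∧ grandNorm q w a Ω f ≠ ⊤ ∧
      ∀ δ : ℝ, 0 < δ → ∃ N : ℕ, ∀ k ≥ N,
        grandNorm q w a Ω (fun x => F k x - f x) < ENNReal.ofReal δ := by
  simp_rw [grandNorm_eq_iSup_eLpNorm hw_meas ha_meas] at hF_mem hF_cauchy ⊢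
  have hp (ε : Ioo (0 : ℝ) (q - 1)) : 1 ≤ ENNReal.ofReal (q - ε) :=
    ENNReal.one_le_ofReal.2 (by linarith [ε.2.2])
  have hμ (ε : Ioo (0 : ℝ) (q - 1)) := grandMeasure_absolutelyContinuous w a Ω ε
  have hF (k : ℕ) := (hF_meas k).aestronglyMeasurable (μ := volume.restrict Ω)
  have hF_cauchy' : ∀ δ > 0, ∃ N, ∀ m ≥ N, ∀ k ≥ N, ⨆ ε : Ioo (0 : ℝ) (q - 1),
      eLpNorm (F m - F k) (ENNReal.ofReal (q - ε)) (grandMeasure w a Ω ε) < δ := by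
    intro δ hδ
    obtain ⟨r, -, hr, hrδ⟩ := ENNReal.lt_iff_exists_real_btwn.1 hδ
    obtain ⟨N, hN⟩ := hF_cauchy r (ofReal_pos.1 hr)
    exact ⟨N, fun m hm k hk => (hN m hm k hk).trans hrδ⟩
  obtain ⟨f, hf, hf_lim⟩ := exists_tendsto_iSup_eLpNorm_of_cauchy hp hμ
    ⟨(q - 1) / 2, by constructor <;> linarith⟩
    (absolutelyContinuous_grandMeasure hw_meas ha_meas hw_pos ha_pos (by linarith)) hF hF_cauchy'
  refine ⟨f, hf.measurable,
    iSup_eLpNorm_ne_top_of_tendsto hp hμ hF hf.aestronglyMeasurable hF_mem hf_lim,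
    fun δ hδ => eventually_atTop.1 (hf_lim.eventually (gt_mem_nhds (ofReal_pos.2 hδ)))⟩

/-- if `w·a^ε ∈ L¹_loc(Ω)` for all `ε ∈ (0,q−1)` and
`a ∈ L^q(Ω,w)`, the generalized grand Lebesgue space `L^{q)}_a(Ω,w)` is a Banach
space; in particular it is complete: every Cauchy sequence (w.r.t. the grand norm)
of functions with finite grand norm converges in the grand norm to a function
with finite grand norm. -/
theorem grand_lebesgue_complete {n : ℕ} (q : ℝ) (hq : 1 < q)
    (Ω : Set (EuclideanSpace ℝ (Fin n))) (hΩ : IsOpen Ω)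
    (w a : EuclideanSpace ℝ (Fin n) → ℝ)
    (hw_meas : Measurable w) (hw_pos : ∀ᵐ x ∂volume.restrict Ω, 0 < w x)
    (ha_meas : Measurable a) (ha_pos : ∀ᵐ x ∂volume.restrict Ω, 0 < a x)
    (hloc : ∀ ε ∈ Set.Ioo (0 : ℝ) (q - 1),
      LocallyIntegrableOn (fun x => w x * a x ^ ε) Ω volume)
    (ha_mem : wLqNorm q w Ω a ≠ ⊤)
    (F : ℕ → EuclideanSpace ℝ (Fin n) → ℝ)
    (hF_meas : ∀ k, Measurable (F k))
    (hF_mem : ∀ k, grandNorm q w a Ω (F k) ≠ ⊤)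
    (hF_cauchy : ∀ δ : ℝ, 0 < δ → ∃ N : ℕ, ∀ m ≥ N, ∀ k ≥ N,
      grandNorm q w a Ω (fun x => F m x - F k x) < ENNReal.ofReal δ) :
    ∃ f : EuclideanSpace ℝ (Fin n) → ℝ, Measurable f ∧ grandNorm q w a Ω f ≠ ⊤ ∧
      ∀ δ : ℝ, 0 < δ → ∃ N : ℕ, ∀ k ≥ N,
        grandNorm q w a Ω (fun x => F k x - f x) < ENNReal.ofReal δ :=
  grand_lebesgue_complete_general q hq Ω w a hw_meas hw_pos ha_meas ha_pos F hF_meas hF_mem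
    hF_cauchy
end

section
/- Let 1 < q < ∞, let Ω ⊆ ℝⁿ be an open set, and let w, a be weights with w·a^ε ∈ L¹_loc(Ω) for all ε ∈ (0, q−1). If a ∈ L^q(Ω,w), then the continuous embedding W^{1,q}(Ω,w) ↪ W^{1,q)}_a(Ω,w) holds; more precisely, ‖f‖_{W^{1,q)}_a(Ω,w)} ≤ K_a ‖f‖_{W^{1,q}(Ω,w)} for all f ∈ W^{1,q}(Ω,w), where K_a = 4 ‖a‖_{L^{q)}_a(Ω,w)} · ‖a‖_{L^q(Ω,w)}^{−1} < ∞. -/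
open MeasureTheory Metric Set ENNReal


private lemma holder_aux {α : Type*} [MeasurableSpace α] (μ : Measure α) {q ε : ℝ}
    (hq : 1 < q) (hε0 : 0 < ε) (hεq : ε < q - 1)
    {w a f : α → ℝ} (hw : Measurable w) (ha : Measurable a)
    (hw_pos : ∀ᵐ x ∂μ, 0 < w x) (ha_pos : ∀ᵐ x ∂μ, 0 < a x)
    (hf : AEMeasurable f μ) :
    (∫⁻ x, ENNReal.ofReal |f x| ^ (q - ε) * ENNReal.ofReal (w x * a x ^ ε) ∂μ) ≤
      (∫⁻ x, ENNReal.ofReal |f x| ^ q * ENNReal.ofReal (w x) ∂μ) ^ ((q - ε)/q) *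
      (∫⁻ x, ENNReal.ofReal |a x| ^ q * ENNReal.ofReal (w x) ∂μ) ^ (ε/q) := by
  have hq0 : (0:ℝ) < q := by linarith
  have hqε : (0:ℝ) < q - ε := by linarith
  set F : α → ℝ≥0∞ := fun x => ENNReal.ofReal |f x| ^ (q - ε) * ENNReal.ofReal (w x) ^ ((q-ε)/q) with hF
  set G : α → ℝ≥0∞ := fun x => ENNReal.ofReal |a x| ^ ε * ENNReal.ofReal (w x) ^ (ε/q) with hG
  have hpq : Real.HolderConjugate (q/(q-ε)) (q/ε) := by
    refine ⟨?_, by positivity, by positivity⟩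
    rw [inv_div, inv_div, inv_one, ← add_div, sub_add_cancel, div_self hq0.ne']
  have hFm : AEMeasurable F μ :=
    (((ENNReal.measurable_ofReal.comp measurable_abs).comp_aemeasurable hf).pow aemeasurable_const).mul
      (((ENNReal.measurable_ofReal.comp hw).pow measurable_const).aemeasurable)
  have hGm : AEMeasurable G μ :=
    (((ENNReal.measurable_ofReal.comp ha.abs).pow measurable_const).mul
      ((ENNReal.measurable_ofReal.comp hw).pow measurable_const)).aemeasurable
  have key : ∀ᵐ x ∂μ, ENNReal.ofReal |f x| ^ (q - ε) * ENNReal.ofReal (w x * a x ^ ε)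
      = F x * G x := by
    filter_upwards [hw_pos, ha_pos] with x hwx hax
    have hw0 : ENNReal.ofReal (w x) ≠ 0 := by
      simp [ENNReal.ofReal_eq_zero]; linarith
    have hsplit : ENNReal.ofReal (w x)
        = ENNReal.ofReal (w x) ^ ((q-ε)/q) * ENNReal.ofReal (w x) ^ (ε/q) := by
      rw [← ENNReal.rpow_add _ _ hw0 ENNReal.ofReal_ne_top,
        show (q-ε)/q + ε/q = 1 by rw [← add_div, sub_add_cancel, div_self hq0.ne'], ENNReal.rpow_one]
    rw [ENNReal.ofReal_mul hwx.le, ← ENNReal.ofReal_rpow_of_pos hax, hsplit, hF, hG]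
    simp only [abs_of_pos hax]
    ring
  rw [lintegral_congr_ae key]
  have H := ENNReal.lintegral_mul_le_Lp_mul_Lq μ hpq hFm hGm
  simp only [Pi.mul_apply] at H
  refine H.trans (le_of_eq ?_)
  rw [one_div_div, one_div_div]
  congr 1
  · congr 1
    refine lintegral_congr fun x => ?_
    rw [hF, ENNReal.mul_rpow_of_nonneg _ _ (by positivity), ← ENNReal.rpow_mul,
      ← ENNReal.rpow_mul, show (q-ε) * (q/(q-ε)) = q by field_simp,
      show ((q-ε)/q) * (q/(q-ε)) = 1 by field_simp, ENNReal.rpow_one]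
  · congr 1
    refine lintegral_congr fun x => ?_
    rw [hG, ENNReal.mul_rpow_of_nonneg _ _ (by positivity), ← ENNReal.rpow_mul,
      ← ENNReal.rpow_mul, show ε * (q/ε) = q by field_simp,
      show (ε/q) * (q/ε) = 1 by field_simp, ENNReal.rpow_one]



/-- `gf : Ω → ℝⁿ` is a weak gradient of `f : Ω → ℝ` on an open set `Ω ⊆ ℝⁿ`. -/
def IsWeakGradOn {n : ℕ} (f : EuclideanSpace ℝ (Fin n) → ℝ)
    (gf : EuclideanSpace ℝ (Fin n) → EuclideanSpace ℝ (Fin n))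
    (Ω : Set (EuclideanSpace ℝ (Fin n))) : Prop :=
  LocallyIntegrableOn f Ω volume ∧ LocallyIntegrableOn gf Ω volume ∧
    ∀ φ : EuclideanSpace ℝ (Fin n) → ℝ, ContDiff ℝ (⊤ : ℕ∞) φ → HasCompactSupport φ →
      tsupport φ ⊆ Ω → ∀ k : Fin n,
        ∫ x in Ω, f x * fderiv ℝ φ x (EuclideanSpace.single k 1)
          = - ∫ x in Ω, gf x k * φ x

/-- The generalized grand Sobolev norm
`‖f‖_{W^{1,q)}_a(Ω,w)} = sup_{0<ε<q−1} ε^{1/(q−ε)} ‖f‖_{W^{1,q−ε}(Ω,wa^ε)}`. -/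
noncomputable def grandSobNormW {n : ℕ} (q : ℝ) (w a : EuclideanSpace ℝ (Fin n) → ℝ)
    (Ω : Set (EuclideanSpace ℝ (Fin n))) (f : EuclideanSpace ℝ (Fin n) → ℝ)
    (gf : EuclideanSpace ℝ (Fin n) → EuclideanSpace ℝ (Fin n)) : ℝ≥0∞ :=
  ⨆ (ε : ℝ) (_ : ε ∈ Set.Ioo (0 : ℝ) (q - 1)),
    ENNReal.ofReal (ε ^ (1 / (q - ε))) *
      (wLqNorm (q - ε) (fun x => w x * a x ^ ε) Ω f +
        wLqNorm (q - ε) (fun x => w x * a x ^ ε) Ω (fun x => ‖gf x‖))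

/-- if `a ∈ L^q(Ω,w)`, then `W^{1,q}(Ω,w) ↪ W^{1,q)}_a(Ω,w)`:
`‖f‖_{W^{1,q)}_a(Ω,w)} ≤ K_a ‖f‖_{W^{1,q}(Ω,w)}` for all `f ∈ W^{1,q}(Ω,w)`,
where `K_a = 4 ‖a‖_{L^{q)}_a(Ω,w)} ‖a‖_{L^q(Ω,w)}^{−1} < ∞`. -/
theorem weighted_sobolev_embeds_grand_sobolev {n : ℕ} (q : ℝ) (hq : 1 < q)
    (Ω : Set (EuclideanSpace ℝ (Fin n))) (hΩ : IsOpen Ω)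
    (w a : EuclideanSpace ℝ (Fin n) → ℝ)
    (hw_meas : Measurable w) (hw_pos : ∀ᵐ x ∂volume.restrict Ω, 0 < w x)
    (ha_meas : Measurable a) (ha_pos : ∀ᵐ x ∂volume.restrict Ω, 0 < a x)
    (hloc : ∀ ε ∈ Set.Ioo (0 : ℝ) (q - 1),
      LocallyIntegrableOn (fun x => w x * a x ^ ε) Ω volume)
    (ha_mem : wLqNorm q w Ω a ≠ ⊤) :
    4 * grandNorm q w a Ω a * (wLqNorm q w Ω a)⁻¹ ≠ ⊤ ∧
    ∀ (f : EuclideanSpace ℝ (Fin n) → ℝ)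
      (gf : EuclideanSpace ℝ (Fin n) → EuclideanSpace ℝ (Fin n)),
      IsWeakGradOn f gf Ω → wLqNorm q w Ω f ≠ ⊤ →
      wLqNorm q w Ω (fun x => ‖gf x‖) ≠ ⊤ →
      grandSobNormW q w a Ω f gf
        ≤ (4 * grandNorm q w a Ω a * (wLqNorm q w Ω a)⁻¹) *
            (wLqNorm q w Ω f + wLqNorm q w Ω (fun x => ‖gf x‖)) := by
  have hq0 : (0:ℝ) < q := by linarith
  have hA : wLqNorm q w Ω a
      = (∫⁻ x in Ω, ENNReal.ofReal |a x| ^ q * ENNReal.ofReal (w x)) ^ (1/q) := rfl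
  set Ia := ∫⁻ x in Ω, ENNReal.ofReal |a x| ^ q * ENNReal.ofReal (w x) with hIadef
  have haJ : ∀ ε : ℝ, 0 < ε →
      (∫⁻ x in Ω, ENNReal.ofReal |a x| ^ (q - ε) * ENNReal.ofReal (w x * a x ^ ε)) = Ia := by
    intro ε hε
    refine lintegral_congr_ae ?_
    filter_upwards [hw_pos, ha_pos] with x hwx hax
    have ha0 : ENNReal.ofReal (a x) ≠ 0 := by
      simp [ENNReal.ofReal_eq_zero]; linarith
    have hsplit : ENNReal.ofReal (a x) ^ q
        = ENNReal.ofReal (a x) ^ (q - ε) * ENNReal.ofReal (a x) ^ ε := by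
      rw [← ENNReal.rpow_add _ _ ha0 ENNReal.ofReal_ne_top]; norm_num
    rw [ENNReal.ofReal_mul hwx.le, ← ENNReal.ofReal_rpow_of_pos hax]
    simp only [abs_of_pos hax]
    rw [hsplit]; ring
  have hterm : ∀ ε ∈ Set.Ioo (0:ℝ) (q-1),
      (ENNReal.ofReal ε * Ia) ^ (1/(q-ε)) ≤ grandNorm q w a Ω a := by
    intro ε hε
    have h := le_iSup₂ (f := fun (ε : ℝ) (_ : ε ∈ Set.Ioo (0:ℝ) (q-1)) =>
      (ENNReal.ofReal ε *
        ∫⁻ x in Ω, ENNReal.ofReal |a x| ^ (q - ε) * ENNReal.ofReal (w x * a x ^ ε))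
          ^ (1/(q-ε))) ε hε
    rw [haJ ε hε.1] at h
    exact h
  by_cases hIa0 : Ia = 0
  · -- degenerate case: the measure restricted to Ω is zero
    have hm : Measurable fun x => ENNReal.ofReal |a x| ^ q * ENNReal.ofReal (w x) :=
      ((ENNReal.measurable_ofReal.comp (measurable_abs.comp ha_meas)).pow
        measurable_const).mul (ENNReal.measurable_ofReal.comp hw_meas)
    have hfalse : ∀ᵐ x ∂(volume.restrict Ω), False := by
      have h0 := (lintegral_eq_zero_iff hm).mp hIa0
      filter_upwards [h0, hw_pos, ha_pos] with x hx hwx hax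
      have h1 : ENNReal.ofReal |a x| ^ q ≠ 0 := by
        rw [Ne, ENNReal.rpow_eq_zero_iff_of_pos hq0, ENNReal.ofReal_eq_zero, not_le]
        exact abs_pos.mpr hax.ne'
      have h2 : ENNReal.ofReal (w x) ≠ 0 := by
        simp [ENNReal.ofReal_eq_zero]; linarith
      exact (mul_ne_zero h1 h2) hx
    have hzero : volume.restrict Ω = 0 :=
      MeasureTheory.ae_eq_bot.mp (Filter.eventually_false_iff_eq_bot.mp hfalse)
    have hG0 : grandNorm q w a Ω a = 0 := by
      refine le_antisymm (iSup₂_le fun ε hε => ?_) zero_le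
      rw [hzero, lintegral_zero_measure, mul_zero,
        ENNReal.zero_rpow_of_pos (one_div_pos.mpr (by linarith [hε.2] : (0:ℝ) < q - ε))]
    constructor
    · rw [hG0]; simp
    · intro f gf hWG hftop hgtop
      simp only [grandSobNormW, wLqNorm]
      refine iSup₂_le fun ε hε => ?_
      rw [hzero, lintegral_zero_measure, lintegral_zero_measure,
        ENNReal.zero_rpow_of_pos (one_div_pos.mpr (by linarith [hε.2] : (0:ℝ) < q - ε)),
        add_zero, mul_zero]
      exact zero_le
  · -- main case
    have hIat : Ia ≠ ⊤ := by
      intro h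
      apply ha_mem
      rw [hA, h, ENNReal.top_rpow_of_pos (one_div_pos.mpr hq0)]
    have hAne0 : wLqNorm q w Ω a ≠ 0 := by
      rw [hA, Ne, ENNReal.rpow_eq_zero_iff_of_pos (one_div_pos.mpr hq0)]
      exact hIa0
    have hAinv : (wLqNorm q w Ω a)⁻¹ ≠ ⊤ := ENNReal.inv_ne_top.mpr hAne0
    have hGle : grandNorm q w a Ω a ≤ max 1 (ENNReal.ofReal q * Ia) := by
      refine iSup₂_le fun ε hε => ?_
      have hqε : (0:ℝ) < q - ε := by linarith [hε.2]
      rw [haJ ε hε.1]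
      have h1 : ENNReal.ofReal ε * Ia ≤ max 1 (ENNReal.ofReal q * Ia) :=
        le_max_of_le_right
          (mul_le_mul_left (ENNReal.ofReal_le_ofReal (by linarith [hε.2, hε.1])) _)
      calc (ENNReal.ofReal ε * Ia) ^ (1/(q-ε))
          ≤ (max 1 (ENNReal.ofReal q * Ia)) ^ (1/(q-ε)) :=
            ENNReal.rpow_le_rpow h1 (le_of_lt (one_div_pos.mpr hqε))
        _ ≤ (max 1 (ENNReal.ofReal q * Ia)) ^ (1:ℝ) :=
            ENNReal.rpow_le_rpow_of_exponent_le (le_max_left _ _)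
              (by rw [div_le_one hqε]; linarith [hε.2])
        _ = _ := ENNReal.rpow_one _
    have hGtop : grandNorm q w a Ω a ≠ ⊤ :=
      ne_top_of_le_ne_top
        (ne_top_of_lt (max_lt ENNReal.one_lt_top
          (ENNReal.mul_lt_top ENNReal.ofReal_lt_top hIat.lt_top))) hGle
    constructor
    · exact ENNReal.mul_ne_top (ENNReal.mul_ne_top (by simp) hGtop) hAinv
    · intro f gf hWG hftop hgtop
      have hfm : AEMeasurable f (volume.restrict Ω) :=
        hWG.1.aestronglyMeasurable.aemeasurable
      have hgm : AEMeasurable (fun x => ‖gf x‖) (volume.restrict Ω) :=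
        hWG.2.1.aestronglyMeasurable.norm.aemeasurable
      simp only [grandSobNormW]
      refine iSup₂_le fun ε hε => ?_
      obtain ⟨hε1, hε2⟩ := hε
      have hqε : (0:ℝ) < q - ε := by linarith
      have hexp : (0:ℝ) < 1/(q-ε) := one_div_pos.mpr hqε
      set r := ε / (q * (q - ε)) with hr
      have bound : ∀ g : EuclideanSpace ℝ (Fin n) → ℝ,
          AEMeasurable g (volume.restrict Ω) →
          wLqNorm (q-ε) (fun x => w x * a x ^ ε) Ω g ≤ wLqNorm q w Ω g * Ia ^ r := by
        intro g hg
        have H := holder_aux (volume.restrict Ω) hq hε1 hε2 hw_meas ha_meas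
          hw_pos ha_pos hg
        have h2 := ENNReal.rpow_le_rpow H (le_of_lt hexp)
        refine le_trans h2 (le_of_eq ?_)
        rw [ENNReal.mul_rpow_of_nonneg _ _ (le_of_lt hexp), ← ENNReal.rpow_mul,
          ← ENNReal.rpow_mul, show (q-ε)/q * (1/(q-ε)) = 1/q by field_simp,
          show ε/q * (1/(q-ε)) = r by rw [hr]; field_simp]
        rfl
      have hc : ENNReal.ofReal ε ^ (1/(q-ε)) * Ia ^ r
          ≤ grandNorm q w a Ω a * (wLqNorm q w Ω a)⁻¹ := by
        have h1 := mul_le_mul_left (hterm ε ⟨hε1, hε2⟩) (wLqNorm q w Ω a)⁻¹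
        refine le_trans (le_of_eq ?_) h1
        rw [hA, ← ENNReal.rpow_neg, ENNReal.mul_rpow_of_nonneg _ _ (le_of_lt hexp),
          mul_assoc, ← ENNReal.rpow_add _ _ hIa0 hIat,
          show 1/(q-ε) + -(1/q) = r by rw [hr]; field_simp; ring]
      calc ENNReal.ofReal (ε ^ (1/(q-ε))) *
            (wLqNorm (q-ε) (fun x => w x * a x ^ ε) Ω f +
              wLqNorm (q-ε) (fun x => w x * a x ^ ε) Ω (fun x => ‖gf x‖))
          ≤ ENNReal.ofReal ε ^ (1/(q-ε)) *
            (wLqNorm q w Ω f * Ia ^ r +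
              wLqNorm q w Ω (fun x => ‖gf x‖) * Ia ^ r) := by
            rw [← ENNReal.ofReal_rpow_of_pos hε1]
            exact mul_le_mul_right (add_le_add (bound f hfm) (bound _ hgm)) _
        _ = (ENNReal.ofReal ε ^ (1/(q-ε)) * Ia ^ r) *
            (wLqNorm q w Ω f + wLqNorm q w Ω (fun x => ‖gf x‖)) := by ring
        _ ≤ (grandNorm q w a Ω a * (wLqNorm q w Ω a)⁻¹) *
            (wLqNorm q w Ω f + wLqNorm q w Ω (fun x => ‖gf x‖)) :=
            mul_le_mul_left hc _
        _ ≤ (4 * grandNorm q w a Ω a * (wLqNorm q w Ω a)⁻¹) *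
            (wLqNorm q w Ω f + wLqNorm q w Ω (fun x => ‖gf x‖)) := by
            refine mul_le_mul_left ?_ _
            rw [mul_assoc]
            exact le_mul_of_one_le_left zero_le (by norm_num)
end
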